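/- arXiv:2301.06207 — 4 statements merged into one kernel-verified Lean document; each statement's English description precedes it below -/
import Mathlib

section
/- If f : {0,1}^n → ℝ has nonlinear part whose range Y satisfies Y ⊆ pss(w) for some w ∈ ℝ^k, then f admits a linearization of size k with respect to the family B of all Boolean functions. -/
open Finset

/-- The set of binary vectors in `ℝ^n`. -/
def IsBinary {n : ℕ} (x : Fin n → ℝ) : Prop := ∀ i, x i = 0 ∨ x i = 1

/-- `f` admits a linearization of size `k` with respect to the family `G`. -/
def HasLin {n : ℕ} (G : Set ((Fin n → ℝ) → ℝ)) (f : (Fin n → ℝ) → ℝ) (k : ℕ) : Prop :=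
  ∃ (g : Fin k → (Fin n → ℝ) → ℝ) (a : Fin n → ℝ) (β : ℝ) (b : Fin k → ℝ),
    (∀ i, g i ∈ G) ∧ ∀ x : Fin n → ℝ, IsBinary x →
      f x = ∑ i, a i * x i + β + ∑ i, b i * g i x

/-- The linearization complexity of `f` with respect to `G` (possibly `⊤` = ∞). -/
noncomputable def lc {n : ℕ} (G : Set ((Fin n → ℝ) → ℝ)) (f : (Fin n → ℝ) → ℝ) : ℕ∞ :=
  sInf {k : ℕ∞ | ∃ m : ℕ, k = (m : ℕ∞) ∧ HasLin G f m}

/-- The family of all Boolean functions (on binary inputs). -/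
def BoolFam (n : ℕ) : Set ((Fin n → ℝ) → ℝ) :=
  {g | ∀ x : Fin n → ℝ, IsBinary x → g x = 0 ∨ g x = 1}
/-- The `i`-th standard unit vector. -/
def unitVec {n : ℕ} (i : Fin n) : Fin n → ℝ := fun j => if j = i then 1 else 0

/-- The nonlinear part of a pseudo-Boolean function `f`. -/
noncomputable def ftilde {n : ℕ} (f : (Fin n → ℝ) → ℝ) (x : Fin n → ℝ) : ℝ :=
  f x - f (fun _ => 0) - ∑ i, (f (unitVec i) - f (fun _ => 0)) * x i

/-- The range of the nonlinear part of `f` over the binary cube. -/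
def nonlinRange {n : ℕ} (f : (Fin n → ℝ) → ℝ) : Set ℝ :=
  {y | ∃ x : Fin n → ℝ, IsBinary x ∧ ftilde f x = y}

/-- The partial sum set of a vector `w ∈ ℝ^k`. -/
def pss {k : ℕ} (w : Fin k → ℝ) : Set ℝ :=
  {y | ∃ I : Finset (Fin k), y = ∑ i ∈ I, w i}


theorem hasLin_of_pss_superset {n k : ℕ} (f : (Fin n → ℝ) → ℝ) (w : Fin k → ℝ)
    (hw : nonlinRange f ⊆ pss w) :
    HasLin (BoolFam n) f k := by
  classical
  have hmem : ∀ x : Fin n → ℝ, IsBinary x → ftilde f x ∈ pss w := fun x hx =>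
    hw ⟨x, hx, rfl⟩
  set I : (Fin n → ℝ) → Finset (Fin k) := fun x =>
    if h : IsBinary x then (hmem x h).choose else ∅ with hI
  refine ⟨fun i x => if i ∈ I x then 1 else 0,
    fun i => f (unitVec i) - f (fun _ => 0), f (fun _ => 0), w, ?_, ?_⟩
  · intro i x hx
    by_cases h : i ∈ I x <;> simp [h]
  · intro x hx
    have hspec : ftilde f x = ∑ i ∈ I x, w i := by
      simp only [hI, dif_pos hx]
      exact (hmem x hx).choose_spec
    have : ∑ i, w i * (if i ∈ I x then (1:ℝ) else 0) = ∑ i ∈ I x, w i := by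
      simp [mul_ite]
    rw [this, ← hspec]
    simp [ftilde]
    ring
end

section
/- For N ≥ 3, the Bernasconi objective function f^bern_N : {0,1}^N → ℝ, defined by f^bern_N(x) = Σ_{d=1}^{N-1} ( Σ_{i=1}^{N-d} (2x_i - 1)(2x_{i+d} - 1) )², admits a linearization of size at most N² with respect to the family B of all Boolean functions, i.e., lc_B(f^bern_N) ≤ N². -/
open Finset

/-- Extend a vector `x ∈ ℝ^N` to a function on `ℕ` by zero. -/
def ext {N : ℕ} (x : Fin N → ℝ) (i : ℕ) : ℝ := if h : i < N then x ⟨i, h⟩ else 0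

/-- The Bernasconi objective function on `{0,1}^N`. -/
def fbern (N : ℕ) : (Fin N → ℝ) → ℝ := fun x =>
  ∑ d ∈ Finset.Icc 1 (N - 1),
    (∑ i ∈ Finset.range (N - d), (2 * ext x i - 1) * (2 * ext x (i + d) - 1)) ^ 2

/-!
On binary inputs every inner sum `S_d(x) = ∑ (2xᵢ - 1)(2x_{i+d} - 1)` is a sum of `N - d` signs,
so it takes one of the `N - d + 1` values `2k - (N - d)`. Hence `S_d(x)² = ∑_ℓ ℓ² [S_d(x) = ℓ]`
over these values, a combination of Boolean indicator functions, and in total at most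
`∑_{d=1}^{N-1} (N - d + 1) ≤ N²` indicators are used.
-/

lemma HasLin.mono {n m k : ℕ} {G : Set ((Fin n → ℝ) → ℝ)} {f : (Fin n → ℝ) → ℝ}
    (h : HasLin G f m) (h0 : (fun _ => 0) ∈ G) (hmk : m ≤ k) : HasLin G f k := by
  obtain ⟨j, rfl⟩ := Nat.exists_eq_add_of_le hmk
  obtain ⟨g, a, β, b, hg, hf⟩ := h
  refine ⟨Fin.append g fun _ _ => 0, a, β, Fin.append b 0, ?_, fun x hx => ?_⟩
  · exact Fin.addCases (by simpa using hg) fun _ => by simpa using h0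
  · simp [hf x hx, Fin.sum_univ_add]

lemma lc_le_of_hasLin {n k : ℕ} {G : Set ((Fin n → ℝ) → ℝ)} {f : (Fin n → ℝ) → ℝ}
    (h : HasLin G f k) : lc G f ≤ k :=
  sInf_le ⟨k, rfl, h⟩

lemma hasLin_of_finset_sum {n : ℕ} {ι : Type*} {G : Set ((Fin n → ℝ) → ℝ)}
    {f : (Fin n → ℝ) → ℝ} (T : Finset ι) (g : ι → (Fin n → ℝ) → ℝ) (c : ι → ℝ)
    (hg : ∀ t ∈ T, g t ∈ G) (hf : ∀ x, IsBinary x → f x = ∑ t ∈ T, c t * g t x) :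
    HasLin G f #T := by
  let e : T ≃ Fin #T := T.equivFin
  refine ⟨fun i => g (e.symm i), 0, 0, fun i => c (e.symm i), fun i => hg _ (e.symm i).2,
    fun x hx => ?_⟩
  rw [hf x hx, ← T.sum_coe_sort, ← e.symm.sum_comp]
  simp

lemma indicator_mem_boolFam {n : ℕ} (p : (Fin n → ℝ) → Prop) [DecidablePred p] :
    (fun x => if p x then 1 else 0) ∈ BoolFam n := by
  intro x _
  by_cases hp : p x <;> simp [hp]

lemma hasLin_sum_comp {n : ℕ} {ι : Type*} (s : Finset ι) (h : ι → (Fin n → ℝ) → ℝ)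
    (V : ι → Finset ℝ) (hV : ∀ x, IsBinary x → ∀ d ∈ s, h d x ∈ V d) (φ : ℝ → ℝ) :
    HasLin (BoolFam n) (fun x => ∑ d ∈ s, φ (h d x)) (∑ d ∈ s, #(V d)) := by
  classical
  rw [← card_sigma]
  refine hasLin_of_finset_sum _ (fun t x => if h t.1 x = t.2 then 1 else 0) (fun t => φ t.2)
    (fun t _ => indicator_mem_boolFam _) fun x hx => ?_
  rw [sum_sigma]
  refine sum_congr rfl fun d hd => ?_
  simp [sum_ite_eq, hV x hx d hd]

/-- The possible values `2k - m`, `0 ≤ k ≤ m`, of a sum of `m` signs. -/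
noncomputable def signSums (m : ℕ) : Finset ℝ :=
  (range (m + 1)).image fun k : ℕ => 2 * (k : ℝ) - m

lemma card_signSums_le (m : ℕ) : #(signSums m) ≤ m + 1 :=
  card_image_le.trans (card_range _).le

lemma sum_mem_signSums {ι : Type*} {s : Finset ι} {f : ι → ℝ}
    (hf : ∀ i ∈ s, f i = 1 ∨ f i = -1) : ∑ i ∈ s, f i ∈ signSums #s := by
  classical
  induction s using Finset.induction_on with
  | empty => simp [signSums]
  | insert a s ha ih =>
    obtain ⟨k, hk, hsum⟩ := mem_image.1 (ih fun i hi => hf i (mem_insert_of_mem hi))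
    rw [mem_range] at hk
    rw [sum_insert ha, card_insert_of_notMem ha, ← hsum, signSums, mem_image]
    rcases hf a (mem_insert_self a s) with h | h
    · exact ⟨k + 1, by rw [mem_range]; omega, by rw [h]; push_cast; ring⟩
    · exact ⟨k, by rw [mem_range]; omega, by rw [h]; push_cast; ring⟩

lemma IsBinary.two_mul_ext_sub_one {N i : ℕ} {x : Fin N → ℝ} (hx : IsBinary x) (hi : i < N) :
    2 * ext x i - 1 = 1 ∨ 2 * ext x i - 1 = -1 := by
  rw [_root_.ext, dif_pos hi]
  rcases hx ⟨i, hi⟩ with h | h <;> norm_num [h]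

lemma IsBinary.autocorrelation_mem_signSums {N : ℕ} {x : Fin N → ℝ} (hx : IsBinary x) (d : ℕ) :
    ∑ i ∈ range (N - d), (2 * ext x i - 1) * (2 * ext x (i + d) - 1) ∈ signSums (N - d) := by
  convert sum_mem_signSums fun i (hi : i ∈ range (N - d)) => ?_ using 2
  · rw [card_range]
  rw [mem_range] at hi
  rcases hx.two_mul_ext_sub_one (i := i) (by omega) with h | h <;>
    rcases hx.two_mul_ext_sub_one (i := i + d) (by omega) with h' | h' <;> norm_num [h, h']

lemma hasLin_fbern (N : ℕ) :
    HasLin (BoolFam N) (fbern N) (∑ d ∈ Icc 1 (N - 1), #(signSums (N - d))) :=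
  hasLin_sum_comp _ _ _ (fun _ hx d _ => hx.autocorrelation_mem_signSums d) (· ^ 2)

theorem lc_bernasconi_le_sq_general (N : ℕ) :
    lc (BoolFam N) (fbern N) ≤ ((N ^ 2 : ℕ) : ℕ∞) := by
  refine lc_le_of_hasLin ((hasLin_fbern N).mono (fun _ _ => Or.inl rfl) ?_)
  calc ∑ d ∈ Icc 1 (N - 1), #(signSums (N - d))
      ≤ ∑ _d ∈ Icc 1 (N - 1), N :=
        sum_le_sum fun d hd => (card_signSums_le _).trans (by rw [mem_Icc] at hd; omega)
    _ = (N - 1) * N := by simp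
    _ ≤ N ^ 2 := by rw [sq]; exact Nat.mul_le_mul_right _ (Nat.sub_le _ _)

theorem lc_bernasconi_le_sq (N : ℕ) (hN : 3 ≤ N) :
    lc (BoolFam N) (fbern N) ≤ ((N ^ 2 : ℕ) : ℕ∞) :=
  lc_bernasconi_le_sq_general N
end

section
/- For N ≥ 3, the number of monomials x_p x_q x_r x_s (with p < q < r < s in {1,…,N}) appearing with nonzero coefficient in the multilinear expansion of f^bern_N is Θ(N³); in particular, a quadruple p < q < r < s corresponds to a nonzero degree-4 monomial if and only if p + s = q + r, and the number of such quadruples is at least ⌊N/4⌋·⌊N/4⌋·(⌊N/4⌋ - 1). -/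
open Finset

/-- The quadruples `p < q < r < s` with `p + s = q + r`. -/
def goodQuads (N : ℕ) : Finset (Fin N × Fin N × Fin N × Fin N) :=
  Finset.univ.filter (fun t => t.1 < t.2.1 ∧ t.2.1 < t.2.2.1 ∧ t.2.2.1 < t.2.2.2 ∧
    (t.1 : ℕ) + (t.2.2.2 : ℕ) = (t.2.1 : ℕ) + (t.2.2.1 : ℕ))

/-!
Evaluating the expansion at the indicator vectors `1_J` and inverting over the subset lattice
gives `c I = ∑_{J ⊆ I} (-1)^{|I \ J|} fbern N 1_J`. With its squares expanded, `fbern N` is a sum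
of products `σ i * σ (i + d) * σ i' * σ (i' + d)` of the spins `σ k = 1 - 2 x_k = (-1)^{x_k}`, and
the inversion of such a product at `I` is `∏_{j ∈ I} ((-1)^{m_j} - 1)`, where `m_j` is the number
of occurrences of `j` among `i, i + d, i', i' + d`. So `c I` is `(-2)^{|I|}` times the number of
terms in which every element of `I` occurs an odd number of times. For `I = {p < q < r < s}` this
forces `{p, q, r, s} = {i, i + d, i', i' + d}`, hence `p + s = q + r`; conversely
`(d, i, i') = (q - p, p, r)` is such a term.
-/

section SubsetMoebius

variable {ι R : Type*} [DecidableEq ι] [CommRing R]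

theorem sum_powerset_neg_one_pow_card_sdiff_mul_prod (I : Finset ι) (u : ι → R) :
    ∑ J ∈ I.powerset, (-1) ^ #(I \ J) * ∏ j ∈ J, u j = ∏ j ∈ I, (u j - 1) := by
  simp_rw [sub_eq_add_neg, prod_add, prod_const, mul_comm]

theorem sum_powerset_neg_one_pow_card_sdiff_mul_ite_subset (I K : Finset ι) :
    ∑ J ∈ I.powerset, (-1 : R) ^ #(I \ J) * (if K ⊆ J then 1 else 0) = if K = I then 1 else 0 := by
  by_cases hKI : K ⊆ I
  · -- put each term in the shape of `Finset.prod_add`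
    have hterm : ∀ J ∈ I.powerset, (-1 : R) ^ #(I \ J) * (if K ⊆ J then 1 else 0) =
        (∏ _ ∈ J, (1 : R)) * ∏ j ∈ I \ J, (if j ∉ K then -1 else 0) := by
      intro J hJ
      have : (∀ j ∈ I \ J, j ∉ K) ↔ K ⊆ J := by
        simp only [mem_sdiff, and_imp, not_imp_not]
        exact ⟨fun h j hj => h j (hKI hj) hj, fun h j _ hj => h hj⟩
      simp only [prod_const_one, one_mul, prod_ite_zero, this, prod_const, mul_ite, mul_one,
        mul_zero]
    rw [sum_congr rfl hterm, ← prod_add]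
    simp_rw [ite_not, add_ite, add_zero, add_neg_cancel, prod_ite_zero, prod_const_one]
    have hIK : (∀ j ∈ I, j ∈ K) ↔ K = I := ⟨subset_antisymm hKI, by rintro rfl; exact fun _ => id⟩
    simp only [hIK]
  · rw [if_neg (fun h => hKI h.subset), sum_eq_zero]
    intro J hJ
    rw [if_neg fun hKJ => hKI (hKJ.trans (mem_powerset.1 hJ)), mul_zero]

end SubsetMoebius

theorem isBinary_ite_mem {n : ℕ} (J : Finset (Fin n)) :
    IsBinary (fun i => if i ∈ J then (1 : ℝ) else 0) := fun i => by
  by_cases hi : i ∈ J <;> simp [hi]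

theorem coeff_eq_sum_powerset {n : ℕ} (f : (Fin n → ℝ) → ℝ) (c : Finset (Fin n) → ℝ)
    (hc : ∀ x, IsBinary x → f x = ∑ I : Finset (Fin n), c I * ∏ i ∈ I, x i) (I : Finset (Fin n)) :
    c I = ∑ J ∈ I.powerset, (-1) ^ #(I \ J) * f (fun i => if i ∈ J then 1 else 0) := by
  have hf : ∀ J : Finset (Fin n), f (fun i => if i ∈ J then 1 else 0) =
      ∑ K, c K * if K ⊆ J then 1 else 0 := fun J => by
    rw [hc _ (isBinary_ite_mem J)]
    simp_rw [prod_boole]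
    rfl
  calc c I = ∑ K, c K * if K = I then 1 else 0 := by simp
    _ = ∑ K, c K * ∑ J ∈ I.powerset, (-1) ^ #(I \ J) * if K ⊆ J then 1 else 0 := by
      simp_rw [sum_powerset_neg_one_pow_card_sdiff_mul_ite_subset]
    _ = _ := by
      simp_rw [hf, mul_sum, mul_left_comm (c _)]
      exact sum_comm

theorem one_sub_two_mul_ext_ite_mem {N : ℕ} (J : Finset (Fin N)) (k : ℕ) :
    1 - 2 * _root_.ext (fun i => if i ∈ J then 1 else 0) k =
      ∏ j ∈ J, if (j : ℕ) = k then -1 else 1 := by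
  unfold _root_.ext
  split_ifs with hk
  · have hval : ∀ j : Fin N, (j : ℕ) = k ↔ j = ⟨k, hk⟩ := fun j => by simp [Fin.ext_iff]
    simp_rw [hval, prod_ite_eq']
    split_ifs <;> norm_num
  · rw [prod_eq_one fun j _ => if_neg (by omega)]
    norm_num

theorem prod_map_one_sub_two_mul_ext_ite_mem {N : ℕ} (J : Finset (Fin N)) (L : List ℕ) :
    (L.map fun k => 1 - 2 * _root_.ext (fun i => if i ∈ J then 1 else 0) k).prod =
      ∏ j ∈ J, (-1) ^ L.count (j : ℕ) := by
  induction L with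
  | nil => simp
  | cons k L ih =>
    rw [List.map_cons, List.prod_cons, ih, one_sub_two_mul_ext_ite_mem, mul_comm]
    simp_rw [List.count_cons, pow_add, prod_mul_distrib, beq_iff_eq, pow_ite, pow_one, pow_zero,
      eq_comm (a := k)]

/-- `⟨d, i, i'⟩` indexes the term `σ i * σ (i + d) * σ i' * σ (i' + d)` of `fbern N` with its
squares expanded. -/
def fbernTerms (N : ℕ) : Finset (Σ _ : ℕ, ℕ × ℕ) :=
  (Icc 1 (N - 1)).sigma fun d => range (N - d) ×ˢ range (N - d)

def fbernWindow (t : Σ _ : ℕ, ℕ × ℕ) : List ℕ :=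
  [t.2.1, t.2.1 + t.1, t.2.2, t.2.2 + t.1]

theorem fbern_eq_sum_fbernTerms (N : ℕ) (x : Fin N → ℝ) :
    fbern N x = ∑ t ∈ fbernTerms N, ((fbernWindow t).map fun k => 1 - 2 * _root_.ext x k).prod := by
  simp only [fbern, fbernTerms, sum_sigma, sum_product, sq, sum_mul_sum]
  refine sum_congr rfl fun d _ => sum_congr rfl fun i _ => sum_congr rfl fun i' _ => ?_
  simp only [fbernWindow, List.map_cons, List.map_nil, List.prod_cons, List.prod_nil]
  ring

theorem neg_one_pow_sub_one {R : Type*} [Ring R] (n : ℕ) :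
    (-1 : R) ^ n - 1 = if Odd n then -2 else 0 := by
  rcases n.even_or_odd with h | h
  · simp [h.neg_one_pow, Nat.not_odd_iff_even.2 h]
  · simp [h.neg_one_pow, h]
    norm_num

theorem coeff_eq_neg_two_pow_mul_card {N : ℕ} (c : Finset (Fin N) → ℝ)
    (hc : ∀ x : Fin N → ℝ, IsBinary x → fbern N x = ∑ I : Finset (Fin N), c I * ∏ i ∈ I, x i)
    (I : Finset (Fin N)) :
    c I = (-2) ^ #I * #{t ∈ fbernTerms N | ∀ j ∈ I, Odd ((fbernWindow t).count (j : ℕ))} := by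
  rw [coeff_eq_sum_powerset (fbern N) c hc I]
  simp_rw [fbern_eq_sum_fbernTerms, prod_map_one_sub_two_mul_ext_ite_mem, mul_sum]
  rw [sum_comm]
  simp_rw [sum_powerset_neg_one_pow_card_sdiff_mul_prod, neg_one_pow_sub_one, prod_ite_zero,
    prod_const, ← sum_filter, sum_const, nsmul_eq_mul, mul_comm]

theorem exists_fbernTerms_odd_count_iff {N p q r s : ℕ} (hpq : p < q) (hqr : q < r) (hrs : r < s)
    (hsN : s < N) :
    (∃ t ∈ fbernTerms N, Odd ((fbernWindow t).count p) ∧ Odd ((fbernWindow t).count q) ∧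
      Odd ((fbernWindow t).count r) ∧ Odd ((fbernWindow t).count s)) ↔ p + s = q + r := by
  constructor
  · rintro ⟨⟨d, i, i'⟩, -, hp, hq, hr, hs⟩
    -- `p < q < r < s` all occur in `[i, i + d, i', i' + d]`, so `p + s = q + r = i + i' + d`
    have hmem : ∀ a, Odd ((fbernWindow ⟨d, i, i'⟩).count a) →
        a = i ∨ a = i + d ∨ a = i' ∨ a = i' + d :=
      fun a ha => by simpa [fbernWindow] using List.count_pos_iff.1 ha.pos
    have := hmem p hp; have := hmem q hq; have := hmem r hr; have := hmem s hs
    omega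
  · intro hsum
    have hwindow : fbernWindow ⟨q - p, p, r⟩ = [p, q, r, s] := by simp [fbernWindow]; omega
    have hnodup : [p, q, r, s].Nodup := by simp; omega
    refine ⟨⟨q - p, p, r⟩, by simp [fbernTerms]; omega, ?_⟩
    simp only [hwindow, List.count_eq_one_of_mem hnodup, List.mem_cons,
      true_or, or_true, odd_one, and_self]

theorem card_goodQuads_le (N : ℕ) : #(goodQuads N) ≤ N ^ 3 := by
  -- `s = q + r - p` is determined by the other three entries
  calc #(goodQuads N) ≤ #(univ : Finset (Fin N × Fin N × Fin N)) := by
        refine card_le_card_of_injOn (fun t => (t.1, t.2.1, t.2.2.1))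
          (fun _ _ => mem_coe.2 (mem_univ _)) ?_
        rintro ⟨p, q, r, s⟩ ht ⟨p', q', r', s'⟩ ht' h
        simp only [goodQuads, mem_coe, mem_filter, mem_univ, true_and, Prod.mk.injEq] at ht ht' h
        obtain ⟨rfl, rfl, rfl⟩ := h
        simp only [Prod.mk.injEq, true_and]
        omega
    _ = N ^ 3 := by simp [pow_succ, mul_assoc]

theorem le_card_goodQuads (N : ℕ) : (N / 4) * (N / 4) * (N / 4 - 1) ≤ #(goodQuads N) := by
  set m := N / 4
  have hm : 4 * m ≤ N := Nat.mul_div_le N 4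
  let f : Fin m × Fin m × Fin (m - 1) → Fin N × Fin N × Fin N × Fin N := fun t =>
    (⟨t.1, by omega⟩, ⟨t.1 + t.2.1 + 1, by omega⟩, ⟨t.1 + t.2.1 + t.2.2 + 2, by omega⟩,
      ⟨t.1 + 2 * t.2.1 + t.2.2 + 3, by omega⟩)
  calc m * m * (m - 1) = #(univ : Finset (Fin m × Fin m × Fin (m - 1))) := by simp [mul_assoc]
    _ ≤ #(goodQuads N) := by
      refine card_le_card_of_injOn f (fun t _ => ?_) ?_
      · simp only [goodQuads, mem_coe, mem_filter, mem_univ, true_and, f, Fin.mk_lt_mk]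
        omega
      · rintro ⟨p, a, b⟩ - ⟨p', a', b'⟩ - h
        simp only [f, Prod.mk.injEq, Fin.mk.injEq] at h
        simp only [Prod.mk.injEq, Fin.ext_iff]
        omega

theorem bernasconi_degree_four_monomials_general (N : ℕ)
    (c : Finset (Fin N) → ℝ)
    (hc : ∀ x : Fin N → ℝ, IsBinary x →
      fbern N x = ∑ I : Finset (Fin N), c I * ∏ i ∈ I, x i) :
    (∀ p q r s : Fin N, p < q → q < r → r < s →
      (c {p, q, r, s} ≠ 0 ↔ (p : ℕ) + (s : ℕ) = (q : ℕ) + (r : ℕ))) ∧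
    (N / 4) * (N / 4) * (N / 4 - 1) ≤ (goodQuads N).card ∧
    (goodQuads N).card ≤ N ^ 3 := by
  refine ⟨fun p q r s hpq hqr hrs => ?_, le_card_goodQuads N, card_goodQuads_le N⟩
  rw [coeff_eq_neg_two_pow_mul_card c hc, ← exists_fbernTerms_odd_count_iff hpq hqr hrs s.isLt]
  simp

theorem bernasconi_degree_four_monomials (N : ℕ) (hN : 3 ≤ N)
    (c : Finset (Fin N) → ℝ)
    (hc : ∀ x : Fin N → ℝ, IsBinary x →
      fbern N x = ∑ I : Finset (Fin N), c I * ∏ i ∈ I, x i) :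
    (∀ p q r s : Fin N, p < q → q < r → r < s →
      (c {p, q, r, s} ≠ 0 ↔ (p : ℕ) + (s : ℕ) = (q : ℕ) + (r : ℕ))) ∧
    (N / 4) * (N / 4) * (N / 4 - 1) ≤ (goodQuads N).card ∧
    (goodQuads N).card ≤ N ^ 3 :=
  bernasconi_degree_four_monomials_general N c hc
end

section
/- Let M ⊆ B be the family of monomials among Boolean functions on {0,1}^n. The set of pseudo-Boolean functions f : {0,1}^n → ℝ with lc_G(f) < 2^n - n - 1, for any family G with M ⊆ G ⊆ B, is a Lebesgue null set in the 2^n-dimensional vector space of all pseudo-Boolean functions on {0,1}^n (identified with ℝ^{2^n} via the values f(x̄), x̄ ∈ {0,1}^n). -/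
open Finset MeasureTheory

/-- Coercion of a Boolean value to a real number. -/
def bval (b : Bool) : ℝ := if b then 1 else 0

/-- `f : {0,1}^n → ℝ` admits a linearization of size `k` with respect to `G`. -/
def HasLinB {n : ℕ} (G : Set ((Fin n → Bool) → ℝ)) (f : (Fin n → Bool) → ℝ) (k : ℕ) : Prop :=
  ∃ (g : Fin k → (Fin n → Bool) → ℝ) (a : Fin n → ℝ) (β : ℝ) (b : Fin k → ℝ),
    (∀ i, g i ∈ G) ∧ ∀ x : Fin n → Bool,
      f x = ∑ i, a i * bval (x i) + β + ∑ i, b i * g i x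

/-- The linearization complexity of `f` with respect to `G`. -/
noncomputable def lcB {n : ℕ} (G : Set ((Fin n → Bool) → ℝ)) (f : (Fin n → Bool) → ℝ) : ℕ∞ :=
  sInf {k : ℕ∞ | ∃ m : ℕ, k = (m : ℕ∞) ∧ HasLinB G f m}

/-- The family of all Boolean functions. -/
def BoolFamB (n : ℕ) : Set ((Fin n → Bool) → ℝ) :=
  {g | ∀ x : Fin n → Bool, g x = 0 ∨ g x = 1}

/-- The family of monomials of degree at least 2. -/
def MonomialsB (n : ℕ) : Set ((Fin n → Bool) → ℝ) :=
  {g | ∃ I : Finset (Fin n), 2 ≤ I.card ∧ g = fun x => ∏ i ∈ I, bval (x i)}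

/-!
A function with a linearization of size `m` over Boolean-valued functions lies in the span of
the `n` coordinates, the constant `1` and `m` functions `{0,1}^n → {0,1}`. There are only
countably many such spans (finitely many for each `m`), and for `m < 2^n - n - 1` each has
fewer than `2^n` generators, so is a proper subspace of `ℝ^{{0,1}^n}` and hence Lebesgue null.
-/

theorem Measure.addHaar_span_range_eq_zero {E ι : Type*} [NormedAddCommGroup E]
    [NormedSpace ℝ E] [MeasurableSpace E] [BorelSpace E] [FiniteDimensional ℝ E]
    (μ : Measure E) [μ.IsAddHaarMeasure] [Fintype ι] (v : ι → E)
    (hv : Fintype.card ι < Module.finrank ℝ E) :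
    μ (Submodule.span ℝ (Set.range v)) = 0 := by
  refine Measure.addHaar_submodule μ _ fun htop => ?_
  have hle := finrank_range_le_card (R := ℝ) v
  rw [Set.finrank, htop, finrank_top] at hle
  omega

theorem bval_decide_eq_one {r : ℝ} (h : r = 0 ∨ r = 1) : bval (decide (r = 1)) = r := by
  rcases h with rfl | rfl <;> simp [bval]

theorem exists_hasLinB_of_lcB_lt {n N : ℕ} {G : Set ((Fin n → Bool) → ℝ)}
    {f : (Fin n → Bool) → ℝ} (hf : lcB G f < N) : ∃ m < N, HasLinB G f m := by
  obtain ⟨_, ⟨m, rfl, hm⟩, hmN⟩ := sInf_lt_iff.1 hf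
  exact ⟨m, by exact_mod_cast hmN, hm⟩

noncomputable def linearizationFamily {n m : ℕ} (h : Fin m → (Fin n → Bool) → Bool) :
    (Fin n ⊕ Unit) ⊕ Fin m → (Fin n → Bool) → ℝ :=
  Sum.elim (Sum.elim (fun j x => bval (x j)) fun _ _ => 1) fun i x => bval (h i x)

theorem HasLinB.exists_mem_span_linearizationFamily {n m : ℕ} {G : Set ((Fin n → Bool) → ℝ)}
    {f : (Fin n → Bool) → ℝ} (hf : HasLinB G f m) (hGB : G ⊆ BoolFamB n) :
    ∃ h : Fin m → (Fin n → Bool) → Bool,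
      f ∈ Submodule.span ℝ (Set.range (linearizationFamily h)) := by
  obtain ⟨g, a, β, b, hgG, hfg⟩ := hf
  refine ⟨fun i x => decide (g i x = 1), (Submodule.mem_span_range_iff_exists_fun ℝ).2
    ⟨Sum.elim (Sum.elim a fun _ => β) b, ?_⟩⟩
  funext x
  have hg : ∀ i, bval (decide (g i x = 1)) = g i x := fun i => bval_decide_eq_one (hGB (hgG i) x)
  simp [Fintype.sum_sum_type, linearizationFamily, hg, hfg x]

theorem finrank_boolCube_fun (n : ℕ) : Module.finrank ℝ ((Fin n → Bool) → ℝ) = 2 ^ n := by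
  simp [Module.finrank_fintype_fun_eq_card]

theorem small_lc_is_null_set_general {n : ℕ} (G : Set ((Fin n → Bool) → ℝ))
    (hGB : G ⊆ BoolFamB n) :
    volume {f : (Fin n → Bool) → ℝ | lcB G f < ((2 ^ n - n - 1 : ℕ) : ℕ∞)} = 0 := by
  have hcover : {f : (Fin n → Bool) → ℝ | lcB G f < ((2 ^ n - n - 1 : ℕ) : ℕ∞)} ⊆
      ⋃ m < 2 ^ n - n - 1, ⋃ h : Fin m → (Fin n → Bool) → Bool,
        (Submodule.span ℝ (Set.range (linearizationFamily h)) : Set ((Fin n → Bool) → ℝ)) := by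
    intro f hf
    obtain ⟨m, hm, hlin⟩ := exists_hasLinB_of_lcB_lt hf
    obtain ⟨h, hfh⟩ := hlin.exists_mem_span_linearizationFamily hGB
    simp only [Set.mem_iUnion]
    exact ⟨m, hm, h, hfh⟩
  refine measure_mono_null hcover <| measure_iUnion_null fun m => measure_iUnion_null fun hm =>
    measure_iUnion_null fun h => Measure.addHaar_span_range_eq_zero _ _ ?_
  have : n < 2 ^ n := Nat.lt_two_pow_self
  simp only [Fintype.card_sum, Fintype.card_fin, Fintype.card_unit, finrank_boolCube_fun]
  omega

theorem small_lc_is_null_set {n : ℕ} (G : Set ((Fin n → Bool) → ℝ))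
    (hMG : MonomialsB n ⊆ G) (hGB : G ⊆ BoolFamB n) :
    volume {f : (Fin n → Bool) → ℝ | lcB G f < ((2 ^ n - n - 1 : ℕ) : ℕ∞)} = 0 :=
  small_lc_is_null_set_general G hGB
end
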